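/- arXiv:2210.01092 — 4 statements merged into one kernel-verified Lean document; each statement's English description precedes it below -/
import Mathlib

section
/- Let (N, (X_i)_{i≥1}) be a random vector with N a positive-integer-valued random variable and X_i ∈ ℝ^d, such that E[∑_{i=1}^N exp(λ‖X_i‖)] < ∞ for all λ ≥ 0. Suppose there is no pair (q, c) ∈ (ℝ^d \ {0}) × ℝ with ⟨q, X_i⟩ = c almost surely for all 1 ≤ i ≤ N. Then the function P̃_X : q ↦ log E[∑_{i=1}^N exp(⟨q, X_i⟩)] is strictly convex on ℝ^d. -/
/-!
Writing `E[∑_{i=1}^N f(ω, i)]` as `∫ f dν` for the measure `ν = (μ ⊗ count)|_{1 ≤ i ≤ N ω}` on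
`Ω × ℕ` turns the function into the log-Laplace transform `q ↦ log ∫ exp ⟪q, Y⟫ dν` of
`Y (ω, i) = X i ω`. Hölder's inequality makes it convex. At a midpoint, Cauchy–Schwarz for
`exp (⟪x, Y⟫ / 2)` and `exp (⟪y, Y⟫ / 2)` is strict unless `⟪x - y, Y⟫` is `ν`-a.e. constant,
and a convex function that is strictly convex at midpoints is strictly convex.
-/

open MeasureTheory Real Set
open scoped RealInnerProductSpace ENNReal

section Midpoint

variable {E : Type*} [AddCommGroup E] [Module ℝ E] {s : Set E} {f : E → ℝ}

theorem ConvexOn.strictConvexOn_of_midpoint_lt (hf : ConvexOn ℝ s f)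
    (h : ∀ x ∈ s, ∀ y ∈ s, x ≠ y →
      f ((1 / 2 : ℝ) • x + (1 / 2 : ℝ) • y) < (f x + f y) / 2) :
    StrictConvexOn ℝ s f := by
  refine ⟨hf.1, fun x hx y hy hxy a b ha hb hab => ?_⟩
  -- Write `a • x + b • y` as the midpoint of two other points of the segment `[x, y]`.
  set ε := min a b
  have hε : 0 < ε := lt_min ha hb
  have hεa : ε ≤ a := min_le_left a b
  have hεb : ε ≤ b := min_le_right a b
  have hp := hf.1 hx hy (by linarith) (by linarith) (by linarith : a + ε + (b - ε) = 1)
  have hr := hf.1 hx hy (by linarith) (by linarith) (by linarith : a - ε + (b + ε) = 1)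
  have hpr : (a + ε) • x + (b - ε) • y ≠ (a - ε) • x + (b + ε) • y := by
    intro heq
    have : (2 * ε) • (x - y) = 0 := by
      rw [smul_sub]
      linear_combination (norm := module) heq
    exact hxy (sub_eq_zero.1 ((smul_eq_zero.1 this).resolve_left (by positivity)))
  have hmid : (1 / 2 : ℝ) • ((a + ε) • x + (b - ε) • y) + (1 / 2 : ℝ) • ((a - ε) • x + (b + ε) • y)
      = a • x + b • y := by module
  have hlt := h _ hp _ hr hpr
  rw [hmid] at hlt
  have h₁ := hf.2 hx hy (by linarith) (by linarith) (by linarith : a + ε + (b - ε) = 1)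
  have h₂ := hf.2 hx hy (by linarith) (by linarith) (by linarith : a - ε + (b + ε) = 1)
  simp only [smul_eq_mul] at h₁ h₂ ⊢
  linarith

end Midpoint

section LogIntegralExp

variable {α : Type*} [MeasurableSpace α] {ν : Measure α}

theorem integral_exp_mul_add_mul_le {f g : α → ℝ} (hf : Integrable (fun x => exp (f x)) ν)
    (hg : Integrable (fun x => exp (g x)) ν) {a b : ℝ} (ha : 0 ≤ a) (hb : 0 ≤ b)
    (hab : a + b = 1) :
    ∫ x, exp (a * f x + b * g x) ∂ν ≤ (∫ x, exp (f x) ∂ν) ^ a * (∫ x, exp (g x) ∂ν) ^ b := by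
  have hF : 0 ≤ ∫ x, exp (f x) ∂ν := integral_nonneg fun x => (exp_pos _).le
  have hG : 0 ≤ ∫ x, exp (g x) ∂ν := integral_nonneg fun x => (exp_pos _).le
  by_cases hi : Integrable (fun x => exp (a * f x + b * g x)) ν
  swap
  · rw [integral_undef hi]; positivity
  have hofReal : ∀ {h : α → ℝ}, Integrable (fun x => exp (h x)) ν →
      ENNReal.ofReal (∫ x, exp (h x) ∂ν) = ∫⁻ x, ENNReal.ofReal (exp (h x)) ∂ν := fun hh =>
    ofReal_integral_eq_lintegral_ofReal hh (ae_of_all _ fun x => (exp_pos _).le)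
  rw [← ENNReal.ofReal_le_ofReal_iff (by positivity)]
  calc ENNReal.ofReal (∫ x, exp (a * f x + b * g x) ∂ν)
      = ∫⁻ x, ENNReal.ofReal (exp (f x)) ^ a * ENNReal.ofReal (exp (g x)) ^ b ∂ν := by
        rw [hofReal hi]
        refine lintegral_congr fun x => ?_
        rw [ENNReal.ofReal_rpow_of_pos (exp_pos _), ENNReal.ofReal_rpow_of_pos (exp_pos _),
          ← ENNReal.ofReal_mul (by positivity), ← exp_mul, ← exp_mul, ← exp_add, mul_comm (f x),
          mul_comm (g x)]
    _ ≤ (∫⁻ x, ENNReal.ofReal (exp (f x)) ∂ν) ^ a * (∫⁻ x, ENNReal.ofReal (exp (g x)) ∂ν) ^ b :=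
        ENNReal.lintegral_mul_norm_pow_le hf.1.aemeasurable.ennreal_ofReal
          hg.1.aemeasurable.ennreal_ofReal ha hb hab
    _ = ENNReal.ofReal ((∫ x, exp (f x) ∂ν) ^ a * (∫ x, exp (g x) ∂ν) ^ b) := by
        rw [ENNReal.ofReal_mul (by positivity), ← ENNReal.ofReal_rpow_of_nonneg hF ha,
          ← ENNReal.ofReal_rpow_of_nonneg hG hb, hofReal hf, hofReal hg]

theorem sq_integral_mul_lt_of_not_ae_eq {u v : α → ℝ} (hu : Integrable (fun x => u x ^ 2) ν)
    (hv : Integrable (fun x => v x ^ 2) ν) (huv : Integrable (fun x => u x * v x) ν)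
    (hv₀ : 0 < ∫ x, v x ^ 2 ∂ν)
    (h : ¬ ∀ᵐ x ∂ν, (∫ y, v y ^ 2 ∂ν) * u x = (∫ y, u y * v y ∂ν) * v x) :
    (∫ x, u x * v x ∂ν) ^ 2 < (∫ x, u x ^ 2 ∂ν) * ∫ x, v x ^ 2 ∂ν := by
  set A := ∫ x, u x ^ 2 ∂ν
  set B := ∫ x, u x * v x ∂ν
  set C := ∫ x, v x ^ 2 ∂ν
  have hW : (fun x => (C * u x - B * v x) ^ 2)
      = fun x => C ^ 2 * u x ^ 2 - 2 * C * B * (u x * v x) + B ^ 2 * v x ^ 2 := by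
    funext x; ring
  have hWint : Integrable (fun x => (C * u x - B * v x) ^ 2) ν := by
    rw [hW]
    exact ((hu.const_mul _).sub (huv.const_mul _)).add (hv.const_mul _)
  have hWeq : ∫ x, (C * u x - B * v x) ^ 2 ∂ν = C * (A * C - B ^ 2) := by
    rw [hW, integral_add (by exact (hu.const_mul _).sub (huv.const_mul _))
        (by exact hv.const_mul _), integral_sub (by exact hu.const_mul _)
        (by exact huv.const_mul _), integral_const_mul, integral_const_mul, integral_const_mul]
    ring
  have hWpos : 0 < ∫ x, (C * u x - B * v x) ^ 2 ∂ν := by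
    refine (integral_nonneg fun x => sq_nonneg _).lt_of_ne fun h₀ => h ?_
    filter_upwards [(integral_eq_zero_iff_of_nonneg (fun x => sq_nonneg _) hWint).1 h₀.symm]
      with x hx
    exact sub_eq_zero.1 (pow_eq_zero_iff two_ne_zero |>.1 hx)
  rw [hWeq] at hWpos
  nlinarith

theorem sq_integral_exp_half_lt {f g : α → ℝ} (hf : Integrable (fun x => exp (f x)) ν)
    (hg : Integrable (fun x => exp (g x)) ν)
    (hfg : Integrable (fun x => exp ((f x + g x) / 2)) ν) [NeZero ν]
    (h : ¬ ∃ c, ∀ᵐ x ∂ν, f x - g x = c) :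
    (∫ x, exp ((f x + g x) / 2) ∂ν) ^ 2 < (∫ x, exp (f x) ∂ν) * ∫ x, exp (g x) ∂ν := by
  have hsq : ∀ t, exp (t / 2) ^ 2 = exp t := fun t => by rw [sq, ← exp_add, add_halves]
  have hmul : ∀ x, exp (f x / 2) * exp (g x / 2) = exp ((f x + g x) / 2) := fun x => by
    rw [← exp_add, add_div]
  have hCS := sq_integral_mul_lt_of_not_ae_eq (ν := ν) (u := fun x => exp (f x / 2))
    (v := fun x => exp (g x / 2)) (by simpa only [hsq] using hf) (by simpa only [hsq] using hg)
    (by simpa only [hmul] using hfg) (by simpa only [hsq] using integral_exp_pos hg)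
  simp only [hsq, hmul] at hCS
  refine hCS fun hae => h ⟨2 * log ((∫ x, exp ((f x + g x) / 2) ∂ν) / ∫ x, exp (g x) ∂ν), ?_⟩
  filter_upwards [hae] with x hx
  have hC := integral_exp_pos hg
  have hx' : exp ((f x - g x) / 2) = (∫ x, exp ((f x + g x) / 2) ∂ν) / ∫ x, exp (g x) ∂ν := by
    rw [sub_div, exp_sub, div_eq_div_iff (exp_pos _).ne' hC.ne']
    linarith
  rw [← hx', log_exp]
  ring

variable {E : Type*} [NormedAddCommGroup E] [InnerProductSpace ℝ E] {Y : α → E}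

theorem convexOn_log_integral_exp_inner [NeZero ν]
    (hY : ∀ q, Integrable (fun x => exp ⟪q, Y x⟫) ν) :
    ConvexOn ℝ univ fun q => log (∫ x, exp ⟪q, Y x⟫ ∂ν) := by
  refine ⟨convex_univ, fun x _ y _ a b ha hb hab => ?_⟩
  have hZ : ∀ q, 0 < ∫ z, exp ⟪q, Y z⟫ ∂ν := fun q => integral_exp_pos (hY q)
  calc log (∫ z, exp ⟪a • x + b • y, Y z⟫ ∂ν)
      = log (∫ z, exp (a * ⟪x, Y z⟫ + b * ⟪y, Y z⟫) ∂ν) := by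
        simp only [inner_add_left, real_inner_smul_left]
    _ ≤ log ((∫ z, exp ⟪x, Y z⟫ ∂ν) ^ a * (∫ z, exp ⟪y, Y z⟫ ∂ν) ^ b) :=
        log_le_log (by simpa only [inner_add_left, real_inner_smul_left] using hZ (a • x + b • y))
          (integral_exp_mul_add_mul_le (hY x) (hY y) ha hb hab)
    _ = a * log (∫ z, exp ⟪x, Y z⟫ ∂ν) + b * log (∫ z, exp ⟪y, Y z⟫ ∂ν) := by
        rw [log_mul (rpow_pos_of_pos (hZ x) a).ne' (rpow_pos_of_pos (hZ y) b).ne',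
          log_rpow (hZ x), log_rpow (hZ y)]

theorem strictConvexOn_log_integral_exp_inner (hY : ∀ q, Integrable (fun x => exp ⟪q, Y x⟫) ν)
    (hnd : ¬ ∃ q : E, q ≠ 0 ∧ ∃ c : ℝ, ∀ᵐ x ∂ν, ⟪q, Y x⟫ = c) :
    StrictConvexOn ℝ univ fun q => log (∫ x, exp ⟪q, Y x⟫ ∂ν) := by
  rcases eq_zero_or_neZero ν with rfl | hν
  · exact ⟨convex_univ, fun x _ y _ hxy => absurd ⟨x - y, sub_ne_zero.2 hxy, 0, by simp⟩ hnd⟩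
  refine (convexOn_log_integral_exp_inner hY).strictConvexOn_of_midpoint_lt
    fun x _ y _ hxy => ?_
  set m := (1 / 2 : ℝ) • x + (1 / 2 : ℝ) • y
  have hmid : ∀ z, ⟪m, z⟫ = (⟪x, z⟫ + ⟪y, z⟫) / 2 := fun z => by
    rw [inner_add_left, real_inner_smul_left, real_inner_smul_left]; ring
  have hlt := sq_integral_exp_half_lt (hY x) (hY y) (by simpa only [hmid] using hY m)
    fun ⟨c, hc⟩ => hnd ⟨x - y, sub_ne_zero.2 hxy, c, by simpa only [inner_sub_left] using hc⟩
  have hZ : ∀ q, 0 < ∫ z, exp ⟪q, Y z⟫ ∂ν := fun q => integral_exp_pos (hY q)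
  have hlog := log_lt_log (pow_pos (by simpa only [hmid] using hZ m) 2) hlt
  rw [log_pow, log_mul (hZ x).ne' (hZ y).ne'] at hlog
  simp only [hmid]
  push_cast at hlog
  linarith

end LogIntegralExp

section RandomIndex

variable {Ω : Type*} [MeasurableSpace Ω] {μ : Measure Ω} {N : Ω → ℕ}

noncomputable def randomIndexMeasure (μ : Measure Ω) (N : Ω → ℕ) : Measure (Ω × ℕ) :=
  (μ.prod Measure.count).restrict {p | p.2 ∈ Finset.Icc 1 (N p.1)}

theorem measurableSet_mem_Icc_one (hN : Measurable N) :
    MeasurableSet {p : Ω × ℕ | p.2 ∈ Finset.Icc 1 (N p.1)} := by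
  simp only [Finset.mem_Icc, ofPred_and]
  exact (measurableSet_le measurable_const measurable_snd).inter
    (measurableSet_le measurable_snd (hN.comp measurable_fst))

theorem measurable_sum_Icc_one {M : Type*} [AddCommMonoid M] [MeasurableSpace M]
    [MeasurableAdd₂ M] (hN : Measurable N) {f : Ω × ℕ → M} (hf : Measurable f) :
    Measurable fun ω => ∑ i ∈ Finset.Icc 1 (N ω), f (ω, i) := by
  have : Measurable fun p : Ω × ℕ => ∑ i ∈ Finset.Icc 1 p.2, f (p.1, i) :=
    measurable_from_prod_countable_left fun n =>
      Finset.measurable_fun_sum (Finset.Icc 1 n) fun i _ =>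
        hf.comp (measurable_id.prodMk measurable_const)
  exact this.comp (measurable_id.prodMk hN)

theorem lintegral_randomIndexMeasure (hN : Measurable N) {f : Ω × ℕ → ℝ≥0∞} (hf : Measurable f) :
    ∫⁻ p, f p ∂randomIndexMeasure μ N = ∫⁻ ω, ∑ i ∈ Finset.Icc 1 (N ω), f (ω, i) ∂μ := by
  rw [randomIndexMeasure, ← lintegral_indicator (measurableSet_mem_Icc_one hN),
    lintegral_prod _ (hf.indicator (measurableSet_mem_Icc_one hN)).aemeasurable]
  refine lintegral_congr fun ω => ?_
  have hslice : ∀ i, {p : Ω × ℕ | p.2 ∈ Finset.Icc 1 (N p.1)}.indicator f (ω, i)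
      = (Finset.Icc 1 (N ω) : Set ℕ).indicator (fun i => f (ω, i)) i := fun i => by
    simp only [indicator, mem_ofPred_eq, Finset.mem_coe]
    congr
  simp only [hslice, lintegral_indicator (Finset.measurableSet _), lintegral_finset,
    Measure.count_singleton, mul_one]

theorem integral_randomIndexMeasure (hN : Measurable N) {f : Ω × ℕ → ℝ} (hf : Measurable f)
    (hf₀ : 0 ≤ f) :
    ∫ p, f p ∂randomIndexMeasure μ N = ∫ ω, ∑ i ∈ Finset.Icc 1 (N ω), f (ω, i) ∂μ := by
  rw [integral_eq_lintegral_of_nonneg_ae (ae_of_all _ hf₀) hf.aestronglyMeasurable,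
    integral_eq_lintegral_of_nonneg_ae (ae_of_all _ fun ω => Finset.sum_nonneg fun i _ => hf₀ _)
      (measurable_sum_Icc_one hN hf).aestronglyMeasurable,
    lintegral_randomIndexMeasure hN hf.ennreal_ofReal]
  simp only [ENNReal.ofReal_sum_of_nonneg fun i _ => hf₀ _]

theorem integrable_randomIndexMeasure_iff (hN : Measurable N) {f : Ω × ℕ → ℝ} (hf : Measurable f)
    (hf₀ : 0 ≤ f) :
    Integrable f (randomIndexMeasure μ N) ↔
      Integrable (fun ω => ∑ i ∈ Finset.Icc 1 (N ω), f (ω, i)) μ := by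
  simp only [Integrable, hf.aestronglyMeasurable,
    (measurable_sum_Icc_one hN hf).aestronglyMeasurable, true_and,
    hasFiniteIntegral_iff_ofReal (ae_of_all _ hf₀),
    hasFiniteIntegral_iff_ofReal (ae_of_all _ fun ω => Finset.sum_nonneg fun i _ => hf₀ (ω, i)),
    lintegral_randomIndexMeasure hN hf.ennreal_ofReal,
    ENNReal.ofReal_sum_of_nonneg fun i _ => hf₀ _]

theorem ae_forall_mem_Icc_of_ae_randomIndexMeasure (hN : Measurable N) {P : Ω × ℕ → Prop}
    (h : ∀ᵐ p ∂randomIndexMeasure μ N, P p) :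
    ∀ᵐ ω ∂μ, ∀ i ∈ Finset.Icc 1 (N ω), P (ω, i) := by
  rw [randomIndexMeasure, ae_restrict_iff' (measurableSet_mem_Icc_one hN)] at h
  filter_upwards [Measure.ae_ae_of_ae_prod h] with ω hω
  exact Measure.ae_count_iff.1 hω

end RandomIndex

theorem pressure_strictConvexOn_general {d : ℕ} {Ω : Type*} [MeasurableSpace Ω]
    (μ : Measure Ω)
    (N : Ω → ℕ) (hNmeas : Measurable N)
    (X : ℕ → Ω → EuclideanSpace ℝ (Fin d)) (hXmeas : ∀ i, Measurable (X i))
    (hmom : ∀ lam : ℝ, 0 ≤ lam →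
      Integrable (fun ω => ∑ i ∈ Finset.Icc 1 (N ω), Real.exp (lam * ‖X i ω‖)) μ)
    (hnd : ¬ ∃ q : EuclideanSpace ℝ (Fin d), q ≠ 0 ∧ ∃ c : ℝ,
      ∀ᵐ ω ∂μ, ∀ i ∈ Finset.Icc 1 (N ω), ⟪q, X i ω⟫ = c) :
    StrictConvexOn ℝ Set.univ
      (fun q : EuclideanSpace ℝ (Fin d) =>
        Real.log (∫ ω, ∑ i ∈ Finset.Icc 1 (N ω), Real.exp ⟪q, X i ω⟫ ∂μ)) := by
  set Y : Ω × ℕ → EuclideanSpace ℝ (Fin d) := fun p => X p.2 p.1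
  have hY : Measurable Y := measurable_from_prod_countable_left hXmeas
  have hexp : ∀ q, Integrable (fun p => exp ⟪q, Y p⟫) (randomIndexMeasure μ N) := fun q => by
    have hbound : Integrable (fun p => exp (‖q‖ * ‖Y p‖)) (randomIndexMeasure μ N) :=
      (integrable_randomIndexMeasure_iff hNmeas (by fun_prop) fun p => (exp_pos _).le).2
        (hmom ‖q‖ (norm_nonneg q))
    refine hbound.mono' (by fun_prop) (ae_of_all _ fun p => ?_)
    rw [norm_of_nonneg (exp_pos _).le]
    exact exp_le_exp.2 (real_inner_le_norm q (Y p))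
  have hZ : ∀ q, ∫ p, exp ⟪q, Y p⟫ ∂randomIndexMeasure μ N
      = ∫ ω, ∑ i ∈ Finset.Icc 1 (N ω), exp ⟪q, X i ω⟫ ∂μ := fun q =>
    integral_randomIndexMeasure hNmeas (by fun_prop) fun p => (exp_pos _).le
  simpa only [hZ] using strictConvexOn_log_integral_exp_inner hexp fun ⟨q, hq, c, hc⟩ =>
    hnd ⟨q, hq, c, ae_forall_mem_Icc_of_ae_randomIndexMeasure hNmeas hc⟩

/-- If `(N, (X_i)_{i≥1})` is a random vector (with `N ≥ 1` integer valued, `X i ∈ ℝ^d`)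
with `E[∑_{i=1}^N exp (λ ‖X i‖)] < ∞` for all `λ ≥ 0`, and no nonzero `q` and constant `c`
satisfy `⟪q, X i⟫ = c` a.s. for all `1 ≤ i ≤ N`, then
`q ↦ log E[∑_{i=1}^N exp ⟪q, X i⟫]` is strictly convex on `ℝ^d`. -/
theorem pressure_strictConvexOn {d : ℕ} {Ω : Type*} [MeasurableSpace Ω]
    (μ : Measure Ω) [IsProbabilityMeasure μ]
    (N : Ω → ℕ) (hN : ∀ ω, 1 ≤ N ω) (hNmeas : Measurable N)
    (X : ℕ → Ω → EuclideanSpace ℝ (Fin d)) (hXmeas : ∀ i, Measurable (X i))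
    (hmom : ∀ lam : ℝ, 0 ≤ lam →
      Integrable (fun ω => ∑ i ∈ Finset.Icc 1 (N ω), Real.exp (lam * ‖X i ω‖)) μ)
    (hnd : ¬ ∃ q : EuclideanSpace ℝ (Fin d), q ≠ 0 ∧ ∃ c : ℝ,
      ∀ᵐ ω ∂μ, ∀ i ∈ Finset.Icc 1 (N ω), ⟪q, X i ω⟫ = c) :
    StrictConvexOn ℝ Set.univ
      (fun q : EuclideanSpace ℝ (Fin d) =>
        Real.log (∫ ω, ∑ i ∈ Finset.Icc 1 (N ω), Real.exp ⟪q, X i ω⟫ ∂μ)) :=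
  pressure_strictConvexOn_general μ N hNmeas X hXmeas hmom hnd
end

section
/- Fix q ∈ ℝ^d and suppose that for each α ∈ ℝ^d, T(α) denotes a real number such that E[∑_{i=1}^N exp(⟨q, X_i - α⟩ - T(α) φ_i)] = 1, where the φ_i are positive random variables. Then α ↦ T(α) is convex: for α₀, α₁ ∈ ℝ^d and θ ∈ [0,1], T(θα₀ + (1-θ)α₁) ≤ θT(α₀) + (1-θ)T(α₁). -/
open MeasureTheory Set
open scoped RealInnerProductSpace

/-! The map `(α, t) ↦ E[∑ᵢ exp (⟪q, Xᵢ - α⟫ - t φᵢ)]` is jointly convex, being an integral of sums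
of exponentials of affine functions, and strictly decreasing in `t` because the `φᵢ` are positive.
At the point `(θ α₀ + (1-θ) α₁, θ T α₀ + (1-θ) T α₁)` it is therefore at most `1`, its value at
`(θ α₀ + (1-θ) α₁, T (θ α₀ + (1-θ) α₁))`, and monotonicity in `t` compares the two second
coordinates. -/

theorem convexOn_of_level_of_strictAnti {E : Type*} [AddCommGroup E] [Module ℝ E]
    {F : E → ℝ → ℝ} {T : E → ℝ} {c : ℝ}
    (hconv : ConvexOn ℝ univ (fun p : E × ℝ => F p.1 p.2)) (hanti : ∀ α, StrictAnti (F α))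
    (hT : ∀ α, F α (T α) = c) : ConvexOn ℝ univ T := by
  refine ⟨convex_univ, fun x _ y _ a b ha hb hab => ?_⟩
  have h := hconv.2 (mem_univ (x, T x)) (mem_univ (y, T y)) ha hb hab
  simp only [Prod.smul_mk, Prod.mk_add_mk, smul_eq_mul, hT] at h
  rw [← add_mul, hab, one_mul, ← hT (a • x + b • y)] at h
  exact (hanti _).le_iff_ge.1 h

section Integral

variable {Ω : Type*} [MeasurableSpace Ω] {μ : Measure Ω}

theorem integral_lt_integral_of_ae_lt [NeZero μ] {f g : Ω → ℝ} (hf : Integrable f μ)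
    (hg : Integrable g μ) (hfg : ∀ᵐ ω ∂μ, f ω < g ω) : ∫ ω, f ω ∂μ < ∫ ω, g ω ∂μ := by
  have hle : f ≤ᵐ[μ] g := hfg.mono fun _ => le_of_lt
  refine (integral_mono_ae hf hg hle).lt_of_ne fun h => ?_
  obtain ⟨ω, hlt, heq⟩ := (hfg.and ((integral_eq_iff_of_ae_le hf hg hle).1 h)).exists
  exact hlt.ne heq

theorem convexOn_integral {E : Type*} [AddCommGroup E] [Module ℝ E] {s : Set E}
    (hs : Convex ℝ s) {g : E → Ω → ℝ} (hconv : ∀ ω, ConvexOn ℝ s (g · ω))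
    (hint : ∀ x ∈ s, Integrable (g x) μ) : ConvexOn ℝ s (fun x => ∫ ω, g x ω ∂μ) := by
  refine ⟨hs, fun x hx y hy a b ha hb hab => ?_⟩
  calc ∫ ω, g (a • x + b • y) ω ∂μ
      ≤ ∫ ω, (a * g x ω + b * g y ω) ∂μ :=
        integral_mono (hint _ (hs hx hy ha hb hab))
          (((hint x hx).const_mul a).add ((hint y hy).const_mul b))
          fun ω => (hconv ω).2 hx hy ha hb hab
    _ = a * ∫ ω, g x ω ∂μ + b * ∫ ω, g y ω ∂μ := by
        rw [integral_add ((hint x hx).const_mul a) ((hint y hy).const_mul b),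
          integral_const_mul, integral_const_mul]

end Integral

section PartitionFunction

variable {Ω E ι : Type*} [NormedAddCommGroup E] [InnerProductSpace ℝ E]

theorem convexOn_exp_inner_sub_sub_mul (q x : E) (c : ℝ) :
    ConvexOn ℝ univ (fun p : E × ℝ => Real.exp (⟪q, x - p.1⟫ - p.2 * c)) := by
  refine ⟨convex_univ, fun p _ p' _ a b ha hb hab => ?_⟩
  have hexp : ⟪q, x - (a • p + b • p').1⟫ - (a • p + b • p').2 * c
      = a * (⟪q, x - p.1⟫ - p.2 * c) + b * (⟪q, x - p'.1⟫ - p'.2 * c) := by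
    simp only [Prod.fst_add, Prod.snd_add, Prod.smul_fst, Prod.smul_snd, smul_eq_mul,
      inner_sub_right, inner_add_right, real_inner_smul_right]
    linear_combination -⟪q, x⟫ * hab
  simpa only [hexp, smul_eq_mul] using convexOn_exp.2 (mem_univ _) (mem_univ _) ha hb hab

variable (I : Ω → Finset ι) (X : ι → Ω → E) (φ : ι → Ω → ℝ) (q : E)

noncomputable def partitionSum (α : E) (t : ℝ) (ω : Ω) : ℝ :=
  ∑ i ∈ I ω, Real.exp (⟪q, X i ω - α⟫ - t * φ i ω)

theorem convexOn_partitionSum (ω : Ω) :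
    ConvexOn ℝ univ (fun p : E × ℝ => partitionSum I X φ q p.1 p.2 ω) := by
  have h := Finset.sum_induction (s := I ω) _ (ConvexOn ℝ univ) (fun _ _ => ConvexOn.add)
    (convexOn_const 0 convex_univ) fun i _ => convexOn_exp_inner_sub_sub_mul q (X i ω) (φ i ω)
  simpa only [partitionSum, Finset.sum_fn] using h

variable [MeasurableSpace Ω] (μ : Measure Ω)

noncomputable def partitionFunction (α : E) (t : ℝ) : ℝ :=
  ∫ ω, partitionSum I X φ q α t ω ∂μ

variable {I X φ q μ}

theorem integrable_partitionSum
    (hmom : ∀ t, Integrable (fun ω => ∑ i ∈ I ω, Real.exp (⟪q, X i ω⟫ - t * φ i ω)) μ)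
    (α : E) (t : ℝ) : Integrable (partitionSum I X φ q α t) μ := by
  have hsum : partitionSum I X φ q α t = fun ω =>
      Real.exp (-⟪q, α⟫) * ∑ i ∈ I ω, Real.exp (⟪q, X i ω⟫ - t * φ i ω) := by
    funext ω
    rw [partitionSum, Finset.mul_sum]
    refine Finset.sum_congr rfl fun i _ => ?_
    rw [← Real.exp_add, inner_sub_right]
    ring_nf
  exact hsum ▸ (hmom t).const_mul _

theorem convexOn_partitionFunction
    (hmom : ∀ t, Integrable (fun ω => ∑ i ∈ I ω, Real.exp (⟪q, X i ω⟫ - t * φ i ω)) μ) :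
    ConvexOn ℝ univ (fun p : E × ℝ => partitionFunction I X φ q μ p.1 p.2) :=
  convexOn_integral convex_univ (convexOn_partitionSum I X φ q)
    fun p _ => integrable_partitionSum hmom p.1 p.2

theorem strictAnti_partitionFunction [NeZero μ]
    (hmom : ∀ t, Integrable (fun ω => ∑ i ∈ I ω, Real.exp (⟪q, X i ω⟫ - t * φ i ω)) μ)
    (hI : ∀ ω, (I ω).Nonempty)
    (hφ : ∀ᵐ ω ∂μ, ∀ i ∈ I ω, 0 < φ i ω) (α : E) :
    StrictAnti (partitionFunction I X φ q μ α) := by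
  intro s t hst
  refine integral_lt_integral_of_ae_lt (integrable_partitionSum hmom α t)
    (integrable_partitionSum hmom α s) ?_
  filter_upwards [hφ] with ω hφω
  refine Finset.sum_lt_sum_of_nonempty (hI ω) fun i hi => Real.exp_lt_exp.2 ?_
  linarith [mul_lt_mul_of_pos_right hst (hφω i hi)]

end PartitionFunction

theorem pressure_convex_in_alpha_general {d : ℕ} {Ω : Type*} [MeasurableSpace Ω]
    (μ : Measure Ω) [IsProbabilityMeasure μ]
    (N : Ω → ℕ) (hN : ∀ ω, 1 ≤ N ω)
    (X : ℕ → Ω → EuclideanSpace ℝ (Fin d))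
    (φ : ℕ → Ω → ℝ)
    (hφpos : ∀ᵐ ω ∂μ, ∀ i ∈ Finset.Icc 1 (N ω), 0 < φ i ω)
    (hmom : ∀ q' : EuclideanSpace ℝ (Fin d), ∀ t : ℝ,
      Integrable (fun ω => ∑ i ∈ Finset.Icc 1 (N ω),
        Real.exp (⟪q', X i ω⟫ - t * φ i ω)) μ)
    (q : EuclideanSpace ℝ (Fin d)) (T : EuclideanSpace ℝ (Fin d) → ℝ)
    (hT : ∀ α : EuclideanSpace ℝ (Fin d),
      (∫ ω, ∑ i ∈ Finset.Icc 1 (N ω),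
        Real.exp (⟪q, X i ω - α⟫ - T α * φ i ω) ∂μ) = 1) :
    ∀ (α₀ α₁ : EuclideanSpace ℝ (Fin d)), ∀ θ ∈ Set.Icc (0:ℝ) 1,
      T (θ • α₀ + (1 - θ) • α₁) ≤ θ * T α₀ + (1 - θ) * T α₁ := by
  rintro α₀ α₁ θ ⟨hθ₀, hθ₁⟩
  have hT_convex : ConvexOn ℝ univ T :=
    convexOn_of_level_of_strictAnti (convexOn_partitionFunction (hmom q))
      (strictAnti_partitionFunction (hmom q) (fun ω => ⟨1, Finset.mem_Icc.2 ⟨le_rfl, hN ω⟩⟩)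
        hφpos) hT
  exact hT_convex.2 (mem_univ α₀) (mem_univ α₁) hθ₀ (sub_nonneg.2 hθ₁) (by ring)

/-- Convexity of `α ↦ P̃_{X,φ,α}(q)`: if for each `α`, `T α` satisfies
`E[∑_{i=1}^N exp (⟪q, X i - α⟫ - T α * φ i)] = 1` where the `φ i` are positive, then `T` is
convex: `T (θ • α₀ + (1-θ) • α₁) ≤ θ * T α₀ + (1-θ) * T α₁` for `θ ∈ [0,1]`. -/
theorem pressure_convex_in_alpha {d : ℕ} {Ω : Type*} [MeasurableSpace Ω]
    (μ : Measure Ω) [IsProbabilityMeasure μ]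
    (N : Ω → ℕ) (hN : ∀ ω, 1 ≤ N ω) (hNmeas : Measurable N)
    (X : ℕ → Ω → EuclideanSpace ℝ (Fin d)) (hXmeas : ∀ i, Measurable (X i))
    (φ : ℕ → Ω → ℝ) (hφmeas : ∀ i, Measurable (φ i))
    (hφpos : ∀ᵐ ω ∂μ, ∀ i ∈ Finset.Icc 1 (N ω), 0 < φ i ω)
    (hmom : ∀ q' : EuclideanSpace ℝ (Fin d), ∀ t : ℝ,
      Integrable (fun ω => ∑ i ∈ Finset.Icc 1 (N ω),
        Real.exp (⟪q', X i ω⟫ - t * φ i ω)) μ)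
    (q : EuclideanSpace ℝ (Fin d)) (T : EuclideanSpace ℝ (Fin d) → ℝ)
    (hT : ∀ α : EuclideanSpace ℝ (Fin d),
      (∫ ω, ∑ i ∈ Finset.Icc 1 (N ω),
        Real.exp (⟪q, X i ω - α⟫ - T α * φ i ω) ∂μ) = 1) :
    ∀ (α₀ α₁ : EuclideanSpace ℝ (Fin d)), ∀ θ ∈ Set.Icc (0:ℝ) 1,
      T (θ • α₀ + (1 - θ) • α₁) ≤ θ * T α₀ + (1 - θ) * T α₁ :=
  pressure_convex_in_alpha_general μ N hN X φ hφpos hmom q T hT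
end

section
/- Let (N, (X_i)_{i≥1}) be a random vector with N a positive-integer-valued random variable with E[N] < ∞, and X_i ∈ ℝ^d with E[∑_{i=1}^N ‖X_i‖] < ∞. Define C_X as the closure of the set of vectors of the form E[∑_{i=1}^N W_i X_i], where (W_i)_{i≥1} ranges over nonnegative random sequences defined jointly with (N, (X_i)) with E[∑_{i=1}^N W_i] = 1. Let e ∈ ℝ^d with ‖e‖ = 1 and c ∈ ℝ be such that ⟨e, β⟩ ≤ c for all β ∈ C_X. Then E[#{1 ≤ i ≤ N : ⟨e, X_i⟩ > c}] = 0; that is, almost surely ⟨e, X_i⟩ ≤ c for all 1 ≤ i ≤ N. -/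
open MeasureTheory
open scoped RealInnerProductSpace

lemma measurable_sum_Icc_N {Ω : Type*} [MeasurableSpace Ω] {E : Type*} [AddCommMonoid E]
    [MeasurableSpace E] [MeasurableAdd₂ E] (N : Ω → ℕ) (hN : Measurable N)
    (f : ℕ → Ω → E) (hf : ∀ i, Measurable (f i)) :
    Measurable (fun ω => ∑ i ∈ Finset.Icc 1 (N ω), f i ω) := by
  have h : Measurable (fun p : Ω × ℕ => ∑ i ∈ Finset.Icc 1 p.2, f i p.1) :=
    measurable_from_prod_countable_left fun n =>
      Finset.measurable_sum (Finset.Icc 1 n) fun i _ => (hf i).comp measurable_id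
  exact h.comp (measurable_id.prodMk hN)

/-- If the halfspace `{β : ⟪e, β⟫ ≤ c}` contains all vectors `E[∑_{i=1}^N W i • X i]` for
nonnegative random weights `(W i)` with `E[∑_{i=1}^N W i] = 1` (i.e. the hyperplane
`⟪e, ·⟫ = c` supports `C_X`), then `E[#{1 ≤ i ≤ N : ⟪e, X i⟫ > c}] = 0`; that is, almost
surely `⟪e, X i⟫ ≤ c` for all `1 ≤ i ≤ N`. -/
theorem supporting_hyperplane_no_mass {d : ℕ} {Ω : Type*} [MeasurableSpace Ω]
    (μ : Measure Ω) [IsProbabilityMeasure μ]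
    (N : Ω → ℕ) (hN : ∀ ω, 1 ≤ N ω) (hNmeas : Measurable N)
    (hNint : Integrable (fun ω => (N ω : ℝ)) μ)
    (X : ℕ → Ω → EuclideanSpace ℝ (Fin d)) (hXmeas : ∀ i, Measurable (X i))
    (hXint : Integrable (fun ω => ∑ i ∈ Finset.Icc 1 (N ω), ‖X i ω‖) μ)
    (e : EuclideanSpace ℝ (Fin d)) (he : ‖e‖ = 1) (c : ℝ)
    (hsupp : ∀ W : ℕ → Ω → ℝ, (∀ i ω, 0 ≤ W i ω) →
      Integrable (fun ω => ∑ i ∈ Finset.Icc 1 (N ω), W i ω) μ →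
      Integrable (fun ω => ∑ i ∈ Finset.Icc 1 (N ω), W i ω • X i ω) μ →
      (∫ ω, ∑ i ∈ Finset.Icc 1 (N ω), W i ω ∂μ) = 1 →
      ⟪e, ∫ ω, ∑ i ∈ Finset.Icc 1 (N ω), W i ω • X i ω ∂μ⟫ ≤ c) :
    (∫ ω, (∑ i ∈ Finset.Icc 1 (N ω), if c < ⟪e, X i ω⟫ then (1:ℝ) else 0) ∂μ) = 0 ∧
    ∀ᵐ ω ∂μ, ∀ i ∈ Finset.Icc 1 (N ω), ⟪e, X i ω⟫ ≤ c := by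
  classical
  set φ : ℕ → Ω → ℝ := fun i ω => if c < ⟪e, X i ω⟫ then (1:ℝ) else 0 with hφ
  have hφmeas : ∀ i, Measurable (φ i) := fun i =>
    Measurable.ite (measurableSet_lt measurable_const (measurable_const.inner (hXmeas i)))
      measurable_const measurable_const
  have hφ01 : ∀ i ω, 0 ≤ φ i ω ∧ φ i ω ≤ 1 := by
    intro i ω
    rw [show φ i ω = if c < ⟪e, X i ω⟫ then (1:ℝ) else 0 from rfl]
    split <;> norm_num
  -- S is the count of indices with ⟪e, X i⟫ > c
  set S : Ω → ℝ := fun ω => ∑ i ∈ Finset.Icc 1 (N ω), φ i ω with hS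
  have hSmeas : Measurable S := measurable_sum_Icc_N N hNmeas φ hφmeas
  have hSnonneg : ∀ ω, 0 ≤ S ω := fun ω =>
    Finset.sum_nonneg fun i _ => (hφ01 i ω).1
  have hSint : Integrable S μ := by
    refine hNint.mono hSmeas.aestronglyMeasurable (Filter.Eventually.of_forall fun ω => ?_)
    rw [Real.norm_eq_abs, Real.norm_natCast, abs_of_nonneg (hSnonneg ω)]
    calc S ω ≤ ∑ i ∈ Finset.Icc 1 (N ω), (1:ℝ) :=
          Finset.sum_le_sum fun i _ => (hφ01 i ω).2
      _ = (N ω : ℝ) := by simp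
  set θ : ℝ := ∫ ω, S ω ∂μ with hθ
  have hθ0 : 0 ≤ θ := integral_nonneg hSnonneg
  -- T is the vector sum
  set T : Ω → EuclideanSpace ℝ (Fin d) := fun ω => ∑ i ∈ Finset.Icc 1 (N ω), φ i ω • X i ω
    with hT
  have hTmeas : Measurable T :=
    measurable_sum_Icc_N N hNmeas _ fun i => (hφmeas i).smul (hXmeas i)
  have hTint : Integrable T μ := by
    refine hXint.mono hTmeas.aestronglyMeasurable (Filter.Eventually.of_forall fun ω => ?_)
    rw [Real.norm_eq_abs, abs_of_nonneg (Finset.sum_nonneg fun i _ => norm_nonneg _)]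
    calc ‖T ω‖ ≤ ∑ i ∈ Finset.Icc 1 (N ω), ‖φ i ω • X i ω‖ := norm_sum_le _ _
      _ ≤ ∑ i ∈ Finset.Icc 1 (N ω), ‖X i ω‖ := by
          refine Finset.sum_le_sum fun i _ => ?_
          rw [norm_smul, Real.norm_eq_abs, abs_of_nonneg (hφ01 i ω).1]
          exact mul_le_of_le_one_left (norm_nonneg _) (hφ01 i ω).2
  -- inner product of e with T
  have hinnerT : ∀ ω, ⟪e, T ω⟫ = ∑ i ∈ Finset.Icc 1 (N ω), φ i ω * ⟪e, X i ω⟫ := by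
    intro ω
    rw [hT, inner_sum]
    exact Finset.sum_congr rfl fun i _ => real_inner_smul_right _ _ _
  have hinnerTint : Integrable (fun ω => ⟪e, T ω⟫) μ := hTint.const_inner e
  -- the "gap" function g
  set g : Ω → ℝ := fun ω => ∑ i ∈ Finset.Icc 1 (N ω), φ i ω * (⟪e, X i ω⟫ - c) with hg
  have hgeq : ∀ ω, g ω = ⟪e, T ω⟫ - c * S ω := by
    intro ω
    simp only [hg, hinnerT, hS, mul_sub, Finset.sum_sub_distrib, Finset.mul_sum]
    congr 1
    exact Finset.sum_congr rfl fun i _ => mul_comm _ _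
  have hgnonneg : ∀ ω, 0 ≤ g ω := by
    intro ω
    refine Finset.sum_nonneg fun i _ => ?_
    rw [show φ i ω = if c < ⟪e, X i ω⟫ then (1:ℝ) else 0 from rfl]
    split_ifs with h
    · rw [one_mul]; linarith
    · rw [zero_mul]
  have hgint : Integrable g μ := by
    have : Integrable (fun ω => ⟪e, T ω⟫ - c * S ω) μ := hinnerTint.sub (hSint.const_mul c)
    exact this.congr (Filter.Eventually.of_forall fun ω => (hgeq ω).symm)
  -- main claim: θ = 0
  have hθeq : θ = 0 := by
    by_contra hne
    have hθpos : 0 < θ := lt_of_le_of_ne hθ0 (Ne.symm hne)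
    -- the weights
    set W : ℕ → Ω → ℝ := fun i ω => θ⁻¹ * φ i ω with hW
    have hWsum : ∀ ω, ∑ i ∈ Finset.Icc 1 (N ω), W i ω = θ⁻¹ * S ω := fun ω =>
      (Finset.mul_sum _ _ _).symm
    have hWvec : ∀ ω, ∑ i ∈ Finset.Icc 1 (N ω), W i ω • X i ω = θ⁻¹ • T ω := by
      intro ω
      rw [hT, Finset.smul_sum]
      exact Finset.sum_congr rfl fun i _ => mul_smul θ⁻¹ (φ i ω) (X i ω)
    have hWint : Integrable (fun ω => ∑ i ∈ Finset.Icc 1 (N ω), W i ω) μ := by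
      refine (hSint.const_mul θ⁻¹).congr (Filter.Eventually.of_forall fun ω => ?_)
      exact (hWsum ω).symm
    have hWvecint : Integrable (fun ω => ∑ i ∈ Finset.Icc 1 (N ω), W i ω • X i ω) μ := by
      refine (hTint.smul θ⁻¹).congr (Filter.Eventually.of_forall fun ω => ?_)
      exact (hWvec ω).symm
    have hWnorm : (∫ ω, ∑ i ∈ Finset.Icc 1 (N ω), W i ω ∂μ) = 1 := by
      rw [integral_congr_ae (Filter.Eventually.of_forall hWsum), integral_const_mul,
        ← hθ, inv_mul_cancel₀ hne]
    have hkey := hsupp W (fun i ω => mul_nonneg (inv_nonneg.mpr hθ0) (hφ01 i ω).1)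
      hWint hWvecint hWnorm
    -- compute the inner product
    have hcomp : ⟪e, ∫ ω, ∑ i ∈ Finset.Icc 1 (N ω), W i ω • X i ω ∂μ⟫
        = θ⁻¹ * ((∫ ω, g ω ∂μ) + c * θ) := by
      rw [integral_congr_ae (Filter.Eventually.of_forall hWvec), integral_smul,
        real_inner_smul_right, ← integral_inner hTint]
      congr 1
      have : (∫ ω, ⟪e, T ω⟫ ∂μ) = ∫ ω, g ω + c * S ω ∂μ := by
        refine integral_congr_ae (Filter.Eventually.of_forall fun ω => ?_)
        show (⟪e, T ω⟫ : ℝ) = g ω + c * S ω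
        rw [hgeq]; ring
      rw [this, integral_add hgint (hSint.const_mul c), integral_const_mul, ← hθ]
    -- ∫ g > 0
    have hgI : 0 < ∫ ω, g ω ∂μ := by
      rcases lt_or_eq_of_le (integral_nonneg hgnonneg : 0 ≤ ∫ ω, g ω ∂μ) with h | h
      · exact h
      · exfalso
        have hg0 : g =ᵐ[μ] 0 := by
          rw [← integral_eq_zero_iff_of_nonneg hgnonneg hgint]
          exact h.symm
        have hS0 : S =ᵐ[μ] 0 := by
          filter_upwards [hg0] with ω hω
          simp only [Pi.zero_apply] at hω ⊢
          have hterms := (Finset.sum_eq_zero_iff_of_nonneg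
            (fun i _ => by
              rw [show φ i ω = if c < ⟪e, X i ω⟫ then (1:ℝ) else 0 from rfl]
              split_ifs with h
              · rw [one_mul]; linarith
              · rw [zero_mul])).mp hω
          refine Finset.sum_eq_zero fun i hi => ?_
          have hti := hterms i hi
          have hr : φ i ω = if c < ⟪e, X i ω⟫ then (1:ℝ) else 0 := rfl
          by_cases hlt : c < ⟪e, X i ω⟫
          · exfalso
            rw [hr, if_pos hlt, one_mul] at hti
            linarith
          · rw [hr, if_neg hlt]
        have : θ = 0 := by
          rw [hθ, integral_congr_ae hS0]
          simp
        exact hne this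
    have : c < ⟪e, ∫ ω, ∑ i ∈ Finset.Icc 1 (N ω), W i ω • X i ω ∂μ⟫ := by
      rw [hcomp]
      have h1 : θ⁻¹ * ((∫ ω, g ω ∂μ) + c * θ) = θ⁻¹ * (∫ ω, g ω ∂μ) + c := by
        field_simp
      rw [h1]
      have : 0 < θ⁻¹ * (∫ ω, g ω ∂μ) := mul_pos (inv_pos.mpr hθpos) hgI
      linarith
    linarith
  refine ⟨hθeq, ?_⟩
  -- the a.e. statement
  have hS0 : S =ᵐ[μ] 0 := by
    rw [← integral_eq_zero_iff_of_nonneg hSnonneg hSint]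
    exact hθeq
  filter_upwards [hS0] with ω hω i hi
  simp only [Pi.zero_apply] at hω
  have hterms := (Finset.sum_eq_zero_iff_of_nonneg (fun i _ => (hφ01 i ω).1)).mp hω
  have hti := hterms i hi
  by_contra hcon
  push_neg at hcon
  rw [show φ i ω = if c < ⟪e, X i ω⟫ then (1:ℝ) else 0 from rfl, if_pos hcon] at hti
  norm_num at hti
end

section
/- Let ψ : ℝ₊ → ℝ₊ be a convex nondecreasing function with ψ(0) = 0 and ψ(x)/x → ∞ as x → ∞. Define Ψ(x) = exp(ψ(x)) - 1 for x ≥ 0 and the convex conjugate Φ(y) = sup{ x|y| - Ψ(x) : x ≥ 0 } for y ∈ ℝ. Then Φ(y) is finite for all y, Φ is convex and nondecreasing on ℝ₊ with Φ(0) = 0, and Φ(y)/(y log y) → 0 as y → ∞. -/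
/-!
Write `Ψ = exp ∘ ψ - 1`. Since `ψ` is superlinear, `Ψ x ≥ ψ x` dominates every linear function
`x * |y|`, so the supremum defining `Φ y` is finite; being a supremum of functions convex in `y`
and nondecreasing in `|y|`, `Φ` is convex and nondecreasing on `ℝ₊`. For the growth, fix `ε > 0`:
the points `x ≤ ε log y` contribute at most `ε y log y`, while for larger `x` superlinearity gives
`ψ x ≥ log y + x`, hence `Ψ x ≥ y (x + 1) - 1 ≥ x y`, so these points contribute nothing.
-/

open Filter Asymptotics

def youngConjSet (F : ℝ → ℝ) (y : ℝ) : Set ℝ :=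
  (fun x => x * |y| - F x) '' Set.Ici 0

noncomputable def youngConj (F : ℝ → ℝ) (y : ℝ) : ℝ :=
  sSup (youngConjSet F y)

section

variable {F : ℝ → ℝ}

theorem bddAbove_youngConjSet (hF : ∀ x, 0 ≤ x → 0 ≤ F x)
    (hgrow : Tendsto (fun x => F x / x) atTop atTop) (y : ℝ) :
    BddAbove (youngConjSet F y) := by
  obtain ⟨M, hM⟩ := eventually_atTop.1 (hgrow.eventually_ge_atTop |y|)
  refine ⟨max M 0 * |y|, ?_⟩
  rintro _ ⟨x, hx, rfl⟩
  rcases le_or_gt x (max M 0) with hxM | hxM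
  · have := mul_le_mul_of_nonneg_right hxM (abs_nonneg y)
    linarith [hF x hx]
  · have hxpos : 0 < x := (le_max_right M 0).trans_lt hxM
    have hlin : |y| * x ≤ F x := (le_div_iff₀ hxpos).1 (hM x ((le_max_left M 0).trans hxM.le))
    nlinarith [mul_nonneg (le_max_right M 0) (abs_nonneg y)]

theorem le_youngConj {y x : ℝ} (hb : BddAbove (youngConjSet F y))
    (hx : 0 ≤ x) : x * |y| - F x ≤ youngConj F y :=
  le_csSup hb ⟨x, hx, rfl⟩

theorem youngConj_le {y B : ℝ} (h : ∀ x, 0 ≤ x → x * |y| - F x ≤ B) : youngConj F y ≤ B :=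
  csSup_le (Set.nonempty_Ici.image _) (by rintro _ ⟨x, hx, rfl⟩; exact h x hx)

theorem youngConj_nonneg (h0 : F 0 = 0) {y : ℝ}
    (hb : BddAbove (youngConjSet F y)) : 0 ≤ youngConj F y := by
  simpa [h0] using le_youngConj hb le_rfl

theorem youngConj_zero (h0 : F 0 = 0) (hF : ∀ x, 0 ≤ x → 0 ≤ F x)
    (hb : BddAbove (youngConjSet F 0)) : youngConj F 0 = 0 :=
  le_antisymm (youngConj_le fun x hx => by simpa using hF x hx) (youngConj_nonneg h0 hb)

theorem youngConj_le_of_abs_le {y₁ y₂ : ℝ} (hb : BddAbove (youngConjSet F y₂))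
    (hy : |y₁| ≤ |y₂|) : youngConj F y₁ ≤ youngConj F y₂ :=
  youngConj_le fun _ hx =>
    (sub_le_sub_right (mul_le_mul_of_nonneg_left hy hx) _).trans (le_youngConj hb hx)

theorem monotoneOn_youngConj (hb : ∀ y, BddAbove (youngConjSet F y)) :
    MonotoneOn (youngConj F) (Set.Ici 0) := fun y₁ h₁ y₂ h₂ hy =>
  youngConj_le_of_abs_le (hb y₂) (by rwa [abs_of_nonneg h₁, abs_of_nonneg h₂])

theorem convexOn_youngConj (hb : ∀ y, BddAbove (youngConjSet F y)) :
    ConvexOn ℝ Set.univ (youngConj F) := by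
  refine ⟨convex_univ, fun y₁ _ y₂ _ a b ha hb' hab => youngConj_le fun x hx => ?_⟩
  have habs : |a • y₁ + b • y₂| ≤ a * |y₁| + b * |y₂| := by
    simpa [abs_mul, abs_of_nonneg ha, abs_of_nonneg hb'] using abs_add_le (a * y₁) (b * y₂)
  calc x * |a • y₁ + b • y₂| - F x
      ≤ a * (x * |y₁| - F x) + b * (x * |y₂| - F x) := by
        have := mul_le_mul_of_nonneg_left habs hx
        linear_combination this + F x * hab
    _ ≤ a • youngConj F y₁ + b • youngConj F y₂ := by
        simp only [smul_eq_mul]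
        gcongr
        exacts [le_youngConj (hb y₁) hx, le_youngConj (hb y₂) hx]

end

theorem tendsto_exp_sub_one_div_atTop {ψ : ℝ → ℝ}
    (hgrow : Tendsto (fun x => ψ x / x) atTop atTop) :
    Tendsto (fun x => (Real.exp (ψ x) - 1) / x) atTop atTop := by
  refine tendsto_atTop_mono' atTop ?_ hgrow
  filter_upwards [eventually_gt_atTop 0] with x hx
  gcongr
  linarith [Real.add_one_le_exp (ψ x)]

theorem mul_sub_exp_sub_one_nonpos {x y t : ℝ} (hy : 1 ≤ y) (ht : Real.log y + x ≤ t) :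
    x * y - (Real.exp t - 1) ≤ 0 := by
  have hy0 : 0 < y := by linarith
  have : y * (x + 1) ≤ Real.exp t :=
    calc y * (x + 1) ≤ y * Real.exp x := by gcongr; exact Real.add_one_le_exp x
      _ = Real.exp (Real.log y + x) := by rw [Real.exp_add, Real.exp_log hy0]
      _ ≤ Real.exp t := Real.exp_le_exp.2 ht
  linarith

theorem youngConj_exp_sub_one_le {ψ : ℝ → ℝ} (hnonneg : ∀ x : ℝ, 0 ≤ x → 0 ≤ ψ x)
    (hgrow : Tendsto (fun x => ψ x / x) atTop atTop) {ε : ℝ} (hε : 0 < ε) :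
    ∀ᶠ y in atTop,
      youngConj (fun x => Real.exp (ψ x) - 1) y ≤ ε * (y * Real.log y) := by
  obtain ⟨M, hM⟩ := eventually_atTop.1 (hgrow.eventually_ge_atTop (1 / ε + 1))
  filter_upwards [eventually_ge_atTop 1, Real.tendsto_log_atTop.eventually_ge_atTop (M / ε)]
    with y hy hlogM
  have hlog : 0 ≤ Real.log y := Real.log_nonneg hy
  refine youngConj_le fun x hx => ?_
  rw [abs_of_nonneg (by linarith)]
  rcases le_or_gt x (ε * Real.log y) with hxy | hxy
  · have := mul_le_mul_of_nonneg_right hxy (by linarith : (0 : ℝ) ≤ y)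
    linarith [Real.add_one_le_exp (ψ x), hnonneg x hx]
  · have hxpos : 0 < x := lt_of_le_of_lt (by positivity) hxy
    have hxM : M ≤ x := le_trans (by rwa [div_le_iff₀' hε] at hlogM) hxy.le
    have hψ : (1 / ε + 1) * x ≤ ψ x := (le_div_iff₀ hxpos).1 (hM x hxM)
    have hlogx : Real.log y ≤ x / ε := by rw [le_div_iff₀' hε]; exact hxy.le
    have : Real.log y + x ≤ ψ x := by linarith [show (1 / ε + 1) * x = x / ε + x by ring]
    have := mul_sub_exp_sub_one_nonpos hy this
    linarith [mul_nonneg hε.le (mul_nonneg (by linarith : (0 : ℝ) ≤ y) hlog)]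

theorem young_conjugate_growth_general (ψ : ℝ → ℝ)
    (h0 : ψ 0 = 0) (hnonneg : ∀ x : ℝ, 0 ≤ x → 0 ≤ ψ x)
    (hgrow : Tendsto (fun x => ψ x / x) atTop atTop)
    (Φ : ℝ → ℝ)
    (hΦ : ∀ y : ℝ, Φ y =
      sSup ((fun x => x * |y| - (Real.exp (ψ x) - 1)) '' Set.Ici 0)) :
    (∀ y : ℝ, BddAbove ((fun x => x * |y| - (Real.exp (ψ x) - 1)) '' Set.Ici 0)) ∧
    ConvexOn ℝ Set.univ Φ ∧ MonotoneOn Φ (Set.Ici 0) ∧ Φ 0 = 0 ∧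
    Tendsto (fun y => Φ y / (y * Real.log y)) atTop (nhds 0) := by
  obtain rfl : Φ = youngConj (fun x => Real.exp (ψ x) - 1) := funext hΦ
  have hΨ0 : Real.exp (ψ 0) - 1 = 0 := by simp [h0]
  have hΨ : ∀ x, 0 ≤ x → 0 ≤ Real.exp (ψ x) - 1 := fun x hx => by
    linarith [Real.one_le_exp (hnonneg x hx)]
  have hb := bddAbove_youngConjSet hΨ (tendsto_exp_sub_one_div_atTop hgrow)
  have hlittle : youngConj (fun x => Real.exp (ψ x) - 1) =o[atTop] fun y => y * Real.log y := by
    refine IsLittleO.of_bound fun ε hε => ?_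
    filter_upwards [youngConj_exp_sub_one_le hnonneg hgrow hε, eventually_ge_atTop 1]
      with y hy hy1
    rwa [Real.norm_of_nonneg (youngConj_nonneg hΨ0 (hb y)),
      Real.norm_of_nonneg (mul_nonneg (by linarith) (Real.log_nonneg hy1))]
  exact ⟨hb, convexOn_youngConj hb, monotoneOn_youngConj hb, youngConj_zero hΨ0 hΨ (hb 0),
    hlittle.tendsto_div_nhds_zero⟩

/-- Let `ψ : ℝ₊ → ℝ₊` be convex, nondecreasing, with `ψ 0 = 0` and `ψ x / x → ∞`. Let
`Ψ x = exp (ψ x) - 1` and let `Φ y = sup { x * |y| - Ψ x : x ≥ 0 }` be the convex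
conjugate. Then `Φ` is finite everywhere (the defining set is bounded above), convex,
nondecreasing on `ℝ₊`, `Φ 0 = 0`, and `Φ y / (y * log y) → 0` as `y → ∞`. -/
theorem young_conjugate_growth (ψ : ℝ → ℝ)
    (hconv : ConvexOn ℝ (Set.Ici 0) ψ) (hmono : MonotoneOn ψ (Set.Ici 0))
    (h0 : ψ 0 = 0) (hnonneg : ∀ x : ℝ, 0 ≤ x → 0 ≤ ψ x)
    (hgrow : Tendsto (fun x => ψ x / x) atTop atTop)
    (Φ : ℝ → ℝ)
    (hΦ : ∀ y : ℝ, Φ y =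
      sSup ((fun x => x * |y| - (Real.exp (ψ x) - 1)) '' Set.Ici 0)) :
    (∀ y : ℝ, BddAbove ((fun x => x * |y| - (Real.exp (ψ x) - 1)) '' Set.Ici 0)) ∧
    ConvexOn ℝ Set.univ Φ ∧ MonotoneOn Φ (Set.Ici 0) ∧ Φ 0 = 0 ∧
    Tendsto (fun y => Φ y / (y * Real.log y)) atTop (nhds 0) :=
  young_conjugate_growth_general ψ h0 hnonneg hgrow Φ hΦ
end
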